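/- arXiv:1003.4447 — 2 statements merged into one kernel-verified Lean document; each statement's English description precedes it below -/
import Mathlib

section
/- A finite simple graph G is isomorphic to a full clique-whiskering H^π of some graph H with clique vertex-partition π if and only if there exists a clique vertex-partition ρ = (U_1, …, U_t) of G such that every clique U_i contains a vertex whose neighborhood in G is contained in U_i. -/
/-- A clique vertex-partition of `G`: a family of `t` pairwise disjoint (possibly empty)
cliques of `G` whose union is the whole vertex set. -/
structure CliquePartition {V : Type*} (G : SimpleGraph V) (t : ℕ) where
  part : Fin t → Finset V
  disj : ∀ i j, i ≠ j → Disjoint (part i) (part j)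
  cover : ∀ v, ∃ i, v ∈ part i
  clique : ∀ i, G.IsClique (part i : Set V)

/-- The clique-whiskered graph `G^π`: to each clique `W_i` of the partition a new vertex
`w_i` (encoded as `Sum.inr i`) is attached, joined to every vertex of `W_i`. -/
def whisker {V : Type*} {t : ℕ} (G : SimpleGraph V) (π : CliquePartition G t) :
    SimpleGraph (V ⊕ Fin t) :=
  SimpleGraph.fromRel fun a b =>
    match a, b with
    | Sum.inl u, Sum.inl v => G.Adj u v
    | Sum.inl v, Sum.inr i => v ∈ π.part i
    | _, _ => False

/-!
In `H^π` the whisker `w_i` has neighbourhood exactly `W_i`, so the parts `W_i ∪ {w_i}` form the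
required partition. Conversely, pick `c_i ∈ U_i` with `N(c_i) ⊆ U_i`. The `c_i` are pairwise
non-adjacent, and a vertex `v` outside `{c_1, …, c_t}` is adjacent to `c_i` iff `v ∈ U_i`;
hence `G` is the whiskering of `G - {c_1, …, c_t}` by the partition `(U_i \ {c_i})`, with `c_i`
as the whisker of the `i`-th part.
-/

open Function

namespace CliquePartition

variable {V V' : Type*} {G : SimpleGraph V} {G' : SimpleGraph V'} {t : ℕ}

/-- The vertex found in a part plays the role of the whisker of that part. -/
def HasWhiskers (ρ : CliquePartition G t) : Prop :=
  ∀ i, ∃ v ∈ ρ.part i, ∀ u, G.Adj v u → u ∈ ρ.part i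

def map (e : G ≃g G') (ρ : CliquePartition G t) : CliquePartition G' t where
  part i := (ρ.part i).map e.toEquiv.toEmbedding
  disj i j hij := (Finset.disjoint_map _).mpr (ρ.disj i j hij)
  cover v := (ρ.cover (e.symm v)).imp fun _ => Finset.mem_map_equiv.mpr
  clique i x hx y hy hxy := by
    rw [Finset.mem_coe, Finset.mem_map_equiv] at hx hy
    exact e.symm.map_adj_iff.mp (ρ.clique i hx hy (e.symm.injective.ne hxy))

@[simp]
lemma mem_map {e : G ≃g G'} {ρ : CliquePartition G t} {i : Fin t} {v : V'} :
    v ∈ (ρ.map e).part i ↔ e.symm v ∈ ρ.part i :=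
  Finset.mem_map_equiv

lemma HasWhiskers.map {ρ : CliquePartition G t} (hρ : ρ.HasWhiskers) (e : G ≃g G') :
    (ρ.map e).HasWhiskers := by
  intro i
  obtain ⟨v, hv, hN⟩ := hρ i
  refine ⟨e v, by simpa using hv, fun u hu => ?_⟩
  rw [mem_map]
  exact hN _ (by simpa using e.symm.map_adj_iff.mpr hu)

end CliquePartition

section Whisker

variable {V : Type*} {G : SimpleGraph V} {t : ℕ} (π : CliquePartition G t)

@[simp]
lemma whisker_adj_inl_inl {u v : V} : (whisker G π).Adj (.inl u) (.inl v) ↔ G.Adj u v := by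
  simp only [whisker, SimpleGraph.fromRel_adj, ne_eq, Sum.inl.injEq, G.adj_comm v u, or_self,
    and_iff_right_iff_imp]
  exact G.ne_of_adj

@[simp]
lemma whisker_adj_inl_inr {v : V} {i : Fin t} :
    (whisker G π).Adj (.inl v) (.inr i) ↔ v ∈ π.part i := by
  simp [whisker]

@[simp]
lemma whisker_adj_inr_inl {v : V} {i : Fin t} :
    (whisker G π).Adj (.inr i) (.inl v) ↔ v ∈ π.part i := by
  simp [whisker]

@[simp]
lemma whisker_not_adj_inr_inr {i j : Fin t} : ¬(whisker G π).Adj (.inr i) (.inr j) := by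
  simp [whisker]

def whiskerPartition : CliquePartition (whisker G π) t where
  part i := (π.part i).disjSum {i}
  disj i j hij := by
    rw [Finset.disjoint_left]
    rintro (v | k) hi hj
    · exact Finset.disjoint_left.mp (π.disj i j hij) (by simpa using hi) (by simpa using hj)
    · simp_all
  cover := by
    rintro (v | i)
    · exact (π.cover v).imp fun _ => Finset.inl_mem_disjSum.mpr
    · exact ⟨i, by simp⟩
  clique i := by
    rintro (u | j) hu (v | k) hv huv <;>
      simp only [Finset.mem_coe, Finset.inl_mem_disjSum, Finset.inr_mem_disjSum,
        Finset.mem_singleton] at hu hv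
    · exact (whisker_adj_inl_inl π).mpr (π.clique i hu hv (by simpa using huv))
    · exact (whisker_adj_inl_inr π).mpr (hv ▸ hu)
    · exact (whisker_adj_inr_inl π).mpr (hu ▸ hv)
    · exact absurd (congrArg _ (hu.trans hv.symm)) huv

lemma hasWhiskers_whiskerPartition : (whiskerPartition π).HasWhiskers := by
  intro i
  refine ⟨.inr i, by simp [whiskerPartition], ?_⟩
  rintro (v | j) h <;> simp_all [whiskerPartition]

end Whisker

lemma Function.Injective.bijective_sumElim_val_compl {ι V : Type*} {c : ι → V}
    (hc : Injective c) : Bijective (Sum.elim (Subtype.val : ↥(Set.range c)ᶜ → V) c) := by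
  refine ⟨?_, fun v => ?_⟩
  · rintro (⟨u, hu⟩ | i) (⟨v, hv⟩ | j) h
    · exact congrArg _ (Subtype.ext h)
    · exact absurd ⟨j, h.symm⟩ hu
    · exact absurd ⟨i, h⟩ hv
    · exact congrArg _ (hc h)
  · by_cases hv : v ∈ Set.range c
    · obtain ⟨i, rfl⟩ := hv
      exact ⟨.inr i, rfl⟩
    · exact ⟨.inl ⟨v, hv⟩, rfl⟩

namespace CliquePartition

variable {V : Type*} {G : SimpleGraph V} {t : ℕ}

noncomputable def induce (ρ : CliquePartition G t) (s : Set V) :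
    CliquePartition (G.induce s) t where
  part i := (ρ.part i).preimage Subtype.val Subtype.val_injective.injOn
  disj i j hij := Finset.disjoint_preimage (ρ.disj i j hij)
  cover v := (ρ.cover v).imp fun _ => Finset.mem_preimage.mpr
  clique i _ hx _ hy hxy :=
    ρ.clique i (Finset.mem_preimage.mp hx) (Finset.mem_preimage.mp hy) (Subtype.coe_ne_coe.mpr hxy)

variable {ρ : CliquePartition G t} {c : Fin t → V}

lemma injective_of_forall_mem (hc : ∀ i, c i ∈ ρ.part i) : Injective c := by
  intro i j h
  by_contra hij
  exact Finset.disjoint_left.mp (ρ.disj i j hij) (hc i) (h ▸ hc j)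

lemma adj_iff_mem_of_forall_adj_mem (hc : ∀ i, c i ∈ ρ.part i)
    (hN : ∀ i u, G.Adj (c i) u → u ∈ ρ.part i) {v : V} (hv : v ∉ Set.range c) (i : Fin t) :
    G.Adj v (c i) ↔ v ∈ ρ.part i :=
  ⟨fun h => hN i v h.symm, fun h => ρ.clique i h (hc i) fun hvc => hv ⟨i, hvc.symm⟩⟩

lemma not_adj_of_forall_adj_mem (hc : ∀ i, c i ∈ ρ.part i)
    (hN : ∀ i u, G.Adj (c i) u → u ∈ ρ.part i) (i j : Fin t) : ¬G.Adj (c i) (c j) := by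
  intro h
  obtain rfl : i = j := by
    by_contra hij
    exact Finset.disjoint_left.mp (ρ.disj i j hij) (hN i _ h) (hc j)
  exact G.irrefl h

noncomputable def isoWhiskerInduce (hc : ∀ i, c i ∈ ρ.part i)
    (hN : ∀ i u, G.Adj (c i) u → u ∈ ρ.part i) :
    G ≃g whisker (G.induce (Set.range c)ᶜ) (ρ.induce _) :=
  RelIso.symm
    { toEquiv := .ofBijective _ (injective_of_forall_mem hc).bijective_sumElim_val_compl
      map_rel_iff' := by
        rintro (⟨u, hu⟩ | i) (⟨v, hv⟩ | j)
        · simp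
        · simpa [induce] using adj_iff_mem_of_forall_adj_mem hc hN hu j
        · simpa [induce, G.adj_comm] using adj_iff_mem_of_forall_adj_mem hc hN hv i
        · simpa using not_adj_of_forall_adj_mem hc hN i j }

end CliquePartition

/-- A graph `G` is (isomorphic to) a full clique-whiskering of some graph if and only if
there exists a clique vertex-partition of `G` such that every clique in the partition
contains a vertex whose neighborhood in `G` is contained in the clique. -/
theorem isFullCliqueWhiskering_iff {V : Type} [Fintype V] (G : SimpleGraph V) :
    (∃ (W : Type) (_ : Fintype W) (H : SimpleGraph W) (t : ℕ)
        (π : CliquePartition H t), Nonempty (G ≃g whisker H π)) ↔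
    (∃ (t : ℕ) (ρ : CliquePartition G t),
        ∀ i, ∃ v ∈ ρ.part i, ∀ u, G.Adj v u → u ∈ ρ.part i) := by
  constructor
  · rintro ⟨W, _, H, t, π, ⟨e⟩⟩
    exact ⟨t, (whiskerPartition π).map e.symm, (hasWhiskers_whiskerPartition π).map e.symm⟩
  · rintro ⟨t, ρ, hρ⟩
    choose c hc hN using hρ
    exact ⟨_, Fintype.ofFinite _, _, t, _, ⟨ρ.isoWhiskerInduce hc hN⟩⟩
end

section
/- For every bipartite graph G on n vertices there exists a bipartite graph H such that the independence complex Ind(H) is pure and vertex-decomposable, every maximal independent set of H has cardinality n, and for every j with 0 ≤ j ≤ n the number of independent sets of cardinality j in H equals Σ_{i=0}^{j} C(n−i, j−i) · f_{i−1}(G), where f_{i−1}(G) is the number of independent sets of cardinality i in G. That is, the face vector of the independence complex of every bipartite graph is the h-vector of the independence complex of a bipartite graph that is vertex-decomposable. (One may take H to be the full whiskering of G, which is again bipartite.) -/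
/-!
Take `H` to be the full whiskering of `G`. It is bipartite, since each whisker `w_v` can take
any colour other than that of `v`. An independent set of `H` is an independent set `A` of `G`
together with any set of whiskers at vertices outside `A`; counting these by `i = |A|` gives the
face numbers, and a maximal one contains exactly one of `v`, `w_v` for every `v`, so it has `n`
elements. Vertex-decomposability is proved for the induced subcomplexes `Ind(H[S])` where `S`
contains the whisker of each of its vertices of `G`: shedding such a vertex `v` leaves a deletion
and a link of the same kind, and once no vertex of `G` is left, `S` is independent and the
complex is a simplex.
-/

/-- A finset of vertices is an independent set of the graph `G`. -/
def IsIndep {V : Type*} (G : SimpleGraph V) (s : Finset V) : Prop :=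
  ∀ u ∈ s, ∀ v ∈ s, ¬ G.Adj u v

/-- The number of independent sets of cardinality `k` in `G`
(the face number `f_{k-1}` of the independence complex of `G`). -/
noncomputable def indepCount {V : Type*} (G : SimpleGraph V) (k : ℕ) : ℕ :=
  Set.ncard {s : Finset V | IsIndep G s ∧ s.card = k}

/-- A simplicial complex (given by its membership predicate on finsets) is pure:
all maximal faces have the same cardinality. -/
def IsPureCpx {α : Type*} (Δ : Finset α → Prop) : Prop :=
  ∀ s t : Finset α, Δ s → Δ t →
    (∀ s', Δ s' → s ⊆ s' → s = s') → (∀ t', Δ t' → t ⊆ t' → t = t') → s.card = t.card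

/-- Vertex-decomposability of a simplicial complex: either it is a simplex, or it has a
shedding vertex `v` such that both the link and the deletion of `v` are pure and
vertex-decomposable. -/
inductive VertexDecomposable {α : Type*} [DecidableEq α] : (Finset α → Prop) → Prop
  | simplex {Δ : Finset α → Prop} (F : Finset α) (h : ∀ s, Δ s ↔ s ⊆ F) :
      VertexDecomposable Δ
  | shed {Δ : Finset α → Prop} (v : α) (hv : Δ {v})
      (hlinkPure : IsPureCpx (fun s => v ∉ s ∧ Δ (insert v s)))
      (hdelPure : IsPureCpx (fun s => v ∉ s ∧ Δ s))
      (hlink : VertexDecomposable (fun s => v ∉ s ∧ Δ (insert v s)))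
      (hdel : VertexDecomposable (fun s => v ∉ s ∧ Δ s)) :
      VertexDecomposable Δ


open Finset Sum

section IndependenceComplex

variable {W : Type*} {H : SimpleGraph W}

theorem IsIndep.mono {s t : Finset W} (ht : IsIndep H t) (hst : s ⊆ t) : IsIndep H s :=
  fun u hu v hv => ht u (hst hu) v (hst hv)

theorem isIndep_singleton (v : W) : IsIndep H {v} := by
  simp [IsIndep]

theorem isIndep_insert [DecidableEq W] {v : W} {s : Finset W} :
    IsIndep H (insert v s) ↔ IsIndep H s ∧ ∀ w ∈ s, ¬ H.Adj v w := by
  simp only [IsIndep, forall_mem_insert, H.irrefl, not_false_eq_true, true_and]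
  exact ⟨fun h => ⟨fun u hu w hw => h.2 u hu |>.2 w hw, h.1⟩,
    fun h => ⟨h.2, fun u hu => ⟨fun huv => h.2 u hu huv.symm, h.1 u hu⟩⟩⟩

theorem indepCount_eq_card [Fintype W] [DecidablePred (IsIndep H)] (k : ℕ) :
    indepCount H k = #{s : Finset W | IsIndep H s ∧ #s = k} := by
  rw [indepCount, ← Set.ncard_coe_finset]
  simp

/-- `Ind(H[S])`, the independence complex of the induced subgraph, as a complex on `W`. -/
def indepComplexOn (H : SimpleGraph W) (S s : Finset W) : Prop :=
  IsIndep H s ∧ s ⊆ S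

variable {S : Finset W}

theorem indepComplexOn_univ [Fintype W] : indepComplexOn H univ = IsIndep H := by
  funext s
  simp [indepComplexOn]

theorem indepComplexOn_iff_subset (hS : IsIndep H S) {s : Finset W} :
    indepComplexOn H S s ↔ s ⊆ S :=
  ⟨And.right, fun hs => ⟨hS.mono hs, hs⟩⟩

theorem del_indepComplexOn [DecidableEq W] (v : W) :
    (fun s => v ∉ s ∧ indepComplexOn H S s) = indepComplexOn H (S.erase v) := by
  funext s
  simp only [indepComplexOn, subset_iff, mem_erase]
  grind

theorem link_indepComplexOn [DecidableEq W] [DecidableRel H.Adj] {v : W} (hv : v ∈ S) :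
    (fun s => v ∉ s ∧ indepComplexOn H S (insert v s)) =
      indepComplexOn H {w ∈ S | w ≠ v ∧ ¬ H.Adj v w} := by
  funext s
  simp only [indepComplexOn, isIndep_insert, subset_iff, mem_filter]
  grind

theorem exists_adj_of_maximal [DecidableEq W] {s : Finset W} (hs : indepComplexOn H S s)
    (hmax : ∀ t, indepComplexOn H S t → s ⊆ t → s = t) {v : W} (hvS : v ∈ S)
    (hvs : v ∉ s) :
    ∃ w ∈ s, H.Adj v w := by
  by_contra! h
  have hface : indepComplexOn H S (insert v s) :=
    ⟨isIndep_insert.2 ⟨hs.1, h⟩, insert_subset hvS hs.2⟩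
  exact hvs (hmax _ hface (subset_insert v s) ▸ mem_insert_self v s)

end IndependenceComplex

theorem isPureCpx_of_card_eq {α : Type*} {Δ : Finset α → Prop} (m : ℕ)
    (h : ∀ s, Δ s → (∀ t, Δ t → s ⊆ t → s = t) → #s = m) : IsPureCpx Δ :=
  fun s t hs ht hsmax htmax => (h s hs hsmax).trans (h t ht htmax).symm

/-- `inl v` is the vertex `v` of `G` and `inr v` its whisker `w_v`. -/
def SimpleGraph.whiskering {V : Type*} (G : SimpleGraph V) : SimpleGraph (V ⊕ V) where
  Adj
    | inl x, inl y => G.Adj x y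
    | inl x, inr y => x = y
    | inr x, inl y => x = y
    | inr _, inr _ => False
  symm := ⟨by
    rintro (x | x) (y | y) h
    exacts [h.symm, h.symm, h.symm, h]⟩
  loopless := ⟨by
    rintro (x | x) h
    exacts [G.irrefl h, h]⟩

namespace SimpleGraph

variable {V : Type*} (G : SimpleGraph V)

theorem Colorable.whiskering {G : SimpleGraph V} {n : ℕ} (hG : G.Colorable (n + 2)) :
    G.whiskering.Colorable (n + 2) := by
  obtain ⟨c⟩ := hG
  have hne : ∀ x, c x ≠ if c x = 0 then 1 else 0 := fun x => by split_ifs with h0 <;> simp [h0]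
  refine ⟨Coloring.mk (Sum.elim c fun x => if c x = 0 then 1 else 0) ?_⟩
  rintro (x | x) (y | y) h
  · exact c.valid h
  · obtain rfl : x = y := h
    exact hne x
  · obtain rfl : x = y := h
    exact (hne x).symm
  · exact h.elim

theorem isIndep_whiskering_iff {s : Finset (V ⊕ V)} :
    IsIndep G.whiskering s ↔ IsIndep G s.toLeft ∧ Disjoint s.toLeft s.toRight := by
  constructor
  · intro hs
    refine ⟨fun x hx y hy => hs _ (mem_toLeft.1 hx) _ (mem_toLeft.1 hy), ?_⟩
    exact Finset.disjoint_left.2 fun x hl hr => hs _ (mem_toLeft.1 hl) _ (mem_toRight.1 hr) rfl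
  · rintro ⟨hind, hdisj⟩ (x | x) hx (y | y) hy
    · exact hind x (mem_toLeft.2 hx) y (mem_toLeft.2 hy)
    · rintro rfl
      exact Finset.disjoint_left.1 hdisj (mem_toLeft.2 hx) (mem_toRight.2 hy)
    · rintro rfl
      exact Finset.disjoint_left.1 hdisj (mem_toLeft.2 hy) (mem_toRight.2 hx)
    · exact id

theorem isIndep_whiskering_of_toLeft_eq_empty {S : Finset (V ⊕ V)} (hS : S.toLeft = ∅) :
    IsIndep G.whiskering S := by
  rw [isIndep_whiskering_iff, hS]
  exact ⟨fun _ h => (notMem_empty _ h).elim, disjoint_empty_left _⟩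

variable [DecidableEq V] {S : Finset (V ⊕ V)}

theorem card_eq_of_maximal_indepComplexOn_whiskering (hS : S.toLeft ⊆ S.toRight)
    {s : Finset (V ⊕ V)} (hs : indepComplexOn G.whiskering S s)
    (hmax : ∀ t, indepComplexOn G.whiskering S t → s ⊆ t → s = t) : #s = #S.toRight := by
  have hdisj := ((isIndep_whiskering_iff G).1 hs.1).2
  have hsub : s.toLeft ∪ s.toRight ⊆ S.toRight :=
    union_subset ((toLeft_subset_toLeft hs.2).trans hS) (toRight_subset_toRight hs.2)
  have hcover : S.toRight ⊆ s.toLeft ∪ s.toRight := by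
    intro x hx
    rw [mem_toRight] at hx
    rw [mem_union, mem_toLeft, mem_toRight, or_iff_not_imp_right]
    intro hxs
    obtain ⟨y | y, hy, hadj⟩ := exists_adj_of_maximal hs hmax hx hxs
    · obtain rfl : x = y := hadj
      exact hy
    · exact hadj.elim
  rw [← card_toLeft_add_card_toRight, ← card_union_of_disjoint hdisj,
    subset_antisymm hsub hcover]

theorem isPureCpx_indepComplexOn_whiskering (hS : S.toLeft ⊆ S.toRight) :
    IsPureCpx (indepComplexOn G.whiskering S) :=
  isPureCpx_of_card_eq _ fun _ hs hmax => card_eq_of_maximal_indepComplexOn_whiskering G hS hs hmax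

theorem vertexDecomposable_indepComplexOn_whiskering (hS : S.toLeft ⊆ S.toRight) :
    VertexDecomposable (indepComplexOn G.whiskering S) := by
  classical
  induction S using Finset.strongInduction with
  | H S ih =>
  obtain hL | ⟨u, hu⟩ := S.toLeft.eq_empty_or_nonempty
  · exact .simplex S fun s =>
      indepComplexOn_iff_subset (isIndep_whiskering_of_toLeft_eq_empty G hL)
  rw [mem_toLeft] at hu
  set L := {w ∈ S | w ≠ inl u ∧ ¬ G.whiskering.Adj (inl u) w}
  have hLS : L.toLeft ⊆ L.toRight := by
    intro x hx
    simp only [L, mem_toLeft, mem_toRight, mem_filter] at hx ⊢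
    have hxu : x ≠ u := fun h => hx.2.1 (h ▸ rfl)
    exact ⟨mem_toRight.1 (hS (mem_toLeft.2 hx.1)), inr_ne_inl, hxu.symm⟩
  have hDS : (S.erase (inl u)).toLeft ⊆ (S.erase (inl u)).toRight := by
    intro x hx
    simp only [mem_toLeft, mem_toRight, mem_erase] at hx ⊢
    exact ⟨inr_ne_inl, mem_toRight.1 (hS (mem_toLeft.2 hx.2))⟩
  refine .shed (inl u) ⟨isIndep_singleton _, singleton_subset_iff.2 hu⟩ ?_ ?_ ?_ ?_
  · rw [link_indepComplexOn hu]
    exact isPureCpx_indepComplexOn_whiskering G hLS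
  · rw [del_indepComplexOn]
    exact isPureCpx_indepComplexOn_whiskering G hDS
  · rw [link_indepComplexOn hu]
    exact ih L (filter_ssubset.2 ⟨inl u, hu, by simp⟩) hLS
  · rw [del_indepComplexOn]
    exact ih _ (erase_ssubset hu) hDS

end SimpleGraph

namespace SimpleGraph

variable {V : Type*} [Fintype V] (G : SimpleGraph V)

theorem card_isIndep_whiskering_card_toLeft [DecidableEq V] [DecidablePred (IsIndep G)]
    [DecidablePred (IsIndep G.whiskering)] {i j : ℕ} (hij : i ≤ j) :
    #{s : Finset (V ⊕ V) | IsIndep G.whiskering s ∧ #s = j ∧ #s.toLeft = i} =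
      (Fintype.card V - i).choose (j - i) * #{A : Finset V | IsIndep G A ∧ #A = i} := by
  let pairs := ({A | IsIndep G A ∧ #A = i} : Finset (Finset V)).sigma
    fun A => powersetCard (j - i) Aᶜ
  have hbij : #{s : Finset (V ⊕ V) | IsIndep G.whiskering s ∧ #s = j ∧ #s.toLeft = i} =
      #pairs := by
    refine card_nbij' (fun s => ⟨s.toLeft, s.toRight⟩) (fun p => p.1.disjSum p.2) ?_ ?_ ?_ ?_
    · intro s hs
      simp only [mem_coe, mem_filter, mem_univ, true_and, isIndep_whiskering_iff] at hs
      have hcard := card_toLeft_add_card_toRight (u := s)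
      simp only [pairs, mem_coe, mem_sigma, mem_filter, mem_univ, true_and,
        mem_powersetCard, subset_compl_iff_disjoint_right]
      exact ⟨⟨hs.1.1, hs.2.2⟩, hs.1.2.symm, by omega⟩
    · rintro ⟨A, B⟩ hp
      simp only [pairs, mem_coe, mem_sigma, mem_filter, mem_univ, true_and,
        mem_powersetCard, subset_compl_iff_disjoint_right] at hp
      simp only [mem_coe, mem_filter, mem_univ, true_and, isIndep_whiskering_iff,
        toLeft_disjSum, toRight_disjSum, card_disjSum]
      exact ⟨⟨hp.1.1, hp.2.1.symm⟩, by omega, hp.1.2⟩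
    · intro s _
      exact toLeft_disjSum_toRight
    · rintro ⟨A, B⟩ _
      simp
  rw [hbij, card_sigma, sum_congr rfl fun A hA => by
    rw [card_powersetCard, card_compl, (mem_filter.1 hA).2.2], sum_const, smul_eq_mul, mul_comm]

theorem indepCount_whiskering (j : ℕ) :
    indepCount G.whiskering j =
      ∑ i ∈ range (j + 1), (Fintype.card V - i).choose (j - i) * indepCount G i := by
  classical
  rw [indepCount_eq_card,
    card_eq_sum_card_fiberwise (f := fun s => #s.toLeft) (t := range (j + 1))]
  · refine sum_congr rfl fun i hi => ?_
    rw [filter_filter, indepCount_eq_card]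
    simp only [and_assoc]
    exact card_isIndep_whiskering_card_toLeft G (Nat.lt_succ_iff.1 (mem_range.1 hi))
  · intro s hs
    simp only [mem_coe, mem_filter, mem_univ, true_and] at hs
    simpa [Nat.lt_succ_iff, ← hs.2] using card_toLeft_le

end SimpleGraph

theorem bipartite_f_is_vd_bipartite_h_general {V : Type} [Fintype V]
    (G : SimpleGraph V) (hG : G.Colorable 2) :
    ∃ (W : Type) (_ : Fintype W) (_ : DecidableEq W) (H : SimpleGraph W),
      H.Colorable 2 ∧
      IsPureCpx (fun s : Finset W => IsIndep H s) ∧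
      VertexDecomposable (fun s : Finset W => IsIndep H s) ∧
      (∀ s : Finset W, IsIndep H s →
        (∀ s', IsIndep H s' → s ⊆ s' → s = s') → s.card = Fintype.card V) ∧
      (∀ j ≤ Fintype.card V,
        indepCount H j =
          ∑ i ∈ Finset.range (j + 1),
            (Fintype.card V - i).choose (j - i) * indepCount G i) := by
  classical
  have hright : (univ : Finset (V ⊕ V)).toRight = univ := by
    ext x
    simp
  have hclosed : (univ : Finset (V ⊕ V)).toLeft ⊆ (univ : Finset (V ⊕ V)).toRight :=
    hright ▸ subset_univ _
  refine ⟨V ⊕ V, inferInstance, inferInstance, G.whiskering, hG.whiskering, ?_, ?_, ?_,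
    fun j _ => G.indepCount_whiskering j⟩
  · simpa only [indepComplexOn_univ] using G.isPureCpx_indepComplexOn_whiskering hclosed
  · simpa only [indepComplexOn_univ] using G.vertexDecomposable_indepComplexOn_whiskering hclosed
  · intro s hs hmax
    rw [← indepComplexOn_univ] at hs hmax
    rw [← card_univ, ← hright]
    exact G.card_eq_of_maximal_indepComplexOn_whiskering hclosed hs hmax

/-- The face vector of the independence complex of every bipartite graph is the `h`-vector
of the independence complex of a vertex-decomposable bipartite graph: for every bipartite
graph `G` on `n` vertices there is a bipartite graph `H` whose independence complex is pure
and vertex-decomposable, all of whose maximal independent sets have cardinality `n`, and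
such that for `0 ≤ j ≤ n` the number of independent sets of cardinality `j` in `H` equals
`∑_{i=0}^{j} C(n-i, j-i) · f_{i-1}(G)`. -/
theorem bipartite_f_is_vd_bipartite_h {V : Type} [Fintype V] [DecidableEq V]
    (G : SimpleGraph V) (hG : G.Colorable 2) :
    ∃ (W : Type) (_ : Fintype W) (_ : DecidableEq W) (H : SimpleGraph W),
      H.Colorable 2 ∧
      IsPureCpx (fun s : Finset W => IsIndep H s) ∧
      VertexDecomposable (fun s : Finset W => IsIndep H s) ∧
      (∀ s : Finset W, IsIndep H s →
        (∀ s', IsIndep H s' → s ⊆ s' → s = s') → s.card = Fintype.card V) ∧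
      (∀ j ≤ Fintype.card V,
        indepCount H j =
          ∑ i ∈ Finset.range (j + 1),
            (Fintype.card V - i).choose (j - i) * indepCount G i) :=
  bipartite_f_is_vd_bipartite_h_general G hG
end
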